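/- arXiv:2010.02070 — 4 statements merged into one kernel-verified Lean document; each statement's English description precedes it below -/
import Mathlib

section
/- Let L ≅ Sym(3) be the permutation group induced by the action of Sym(3) on the set of ordered pairs of distinct elements of {1,2,3}, and let (Γ,G) be a locally L pair. Then for every vertex x of Γ, the pointwise stabiliser G_x^{[1]} of the ball of radius 1 around x is trivial. -/
open MulAction Pointwise

/-- The set of ordered pairs of distinct elements of `{1,…,n}`. -/
abbrev OPairs (n : ℕ) : Type := {p : Fin n × Fin n // p.1 ≠ p.2}

/-- `Sym(n)` acts on the ordered pairs of distinct elements. -/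
instance opairsAction (n : ℕ) : MulAction (Equiv.Perm (Fin n)) (OPairs n) where
  smul σ p := ⟨(σ p.1.1, σ p.1.2), fun h => p.2 (σ.injective h)⟩
  one_smul p := rfl
  mul_smul σ τ p := rfl

/-- Every element of `G` is an automorphism of `Γ`. -/
def PreservesAdj {V : Type*} (Γ : SimpleGraph V) (G : Subgroup (Equiv.Perm V)) : Prop :=
  ∀ g ∈ G, ∀ u v : V, Γ.Adj u v ↔ Γ.Adj (g u) (g v)

/-- The pointwise stabiliser in `G` of the ball of radius `i` around `x`. -/
def ballStab {V : Type*} (Γ : SimpleGraph V) (G : Subgroup (Equiv.Perm V)) (x : V) (i : ℕ) :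
    Subgroup G :=
  ⨅ (v : V) (_ : Γ.dist x v ≤ i), MulAction.stabilizer G v

/-- `(Γ, G)` is a locally `L` pair, for `L` the permutation group induced by `Sym(n)` on
ordered pairs of distinct elements of `{1,…,n}`. -/
def IsLocallyOPairs (n : ℕ) {V : Type*} (Γ : SimpleGraph V) (G : Subgroup (Equiv.Perm V)) :
    Prop :=
  PreservesAdj Γ G ∧ MulAction.IsPretransitive G V ∧
  ∀ x : V, ∃ (e : Γ.neighborSet x ≃ OPairs n)
      (φ : MulAction.stabilizer G x →* Equiv.Perm (Fin n)),
    Function.Surjective φ ∧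
    ∀ (g : MulAction.stabilizer G x) (v : Γ.neighborSet x),
      ((e.symm (φ g • e v) : Γ.neighborSet x) : V) = g • (v : V)

/-
The local action of `Sym(3)` on ordered pairs is regular, so an element of `G_u` fixing one
neighbour of `u` fixes all of them. Starting from the ball of radius one around `x`, this
propagates along walks, and connectedness forces an element of `G_x^{[1]}` to fix every vertex.
-/

lemma OPairs.eq_one_of_smul_eq (σ : Equiv.Perm (Fin 3)) (p : OPairs 3) (h : σ • p = p) :
    σ = 1 := by
  revert σ p
  decide

lemma mem_ballStab_iff {V : Type*} {Γ : SimpleGraph V} {G : Subgroup (Equiv.Perm V)} {x : V}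
    {i : ℕ} {g : G} : g ∈ ballStab Γ G x i ↔ ∀ v, Γ.dist x v ≤ i → g • v = v := by
  simp only [ballStab, Subgroup.mem_iInf, MulAction.mem_stabilizer_iff]

lemma SimpleGraph.Walk.apply_eq_of_fix_neighborSet {V : Type*} {Γ : SimpleGraph V}
    (f : Equiv.Perm V)
    (hstep : ∀ u w, Γ.Adj u w → f u = u → f w = w → ∀ z, Γ.Adj u z → f z = z) :
    ∀ {u v : V} (_ : Γ.Walk u v), f u = u → (∀ z, Γ.Adj u z → f z = z) →
      f v = v ∧ ∀ z, Γ.Adj v z → f z = z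
  | _, _, .nil, hu, hnu => ⟨hu, hnu⟩
  | _, _, .cons h q, hu, hnu =>
    have hw := hnu _ h
    apply_eq_of_fix_neighborSet f hstep q hw (hstep _ _ h.symm hw hu)

lemma eq_one_of_fix_neighborSet {V : Type*} {Γ : SimpleGraph V} (hconn : Γ.Connected)
    (f : Equiv.Perm V)
    (hstep : ∀ u w, Γ.Adj u w → f u = u → f w = w → ∀ z, Γ.Adj u z → f z = z)
    {x : V} (hx : f x = x) (hnx : ∀ z, Γ.Adj x z → f z = z) : f = 1 :=
  Equiv.ext fun v => ((hconn x v).some.apply_eq_of_fix_neighborSet f hstep hx hnx).1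

lemma IsLocallyOPairs.apply_eq_of_fix_adj {n : ℕ} {V : Type*} {Γ : SimpleGraph V}
    {G : Subgroup (Equiv.Perm V)} (hloc : IsLocallyOPairs n Γ G)
    (hfree : ∀ (σ : Equiv.Perm (Fin n)) (p : OPairs n), σ • p = p → σ = 1)
    (g : G) {u w : V} (hw : Γ.Adj u w) (hu : g • u = u) (hgw : g • w = w)
    {z : V} (hz : Γ.Adj u z) : g • z = z := by
  obtain ⟨e, φ, -, hcompat⟩ := hloc.2.2 u
  set g' : stabilizer G u := ⟨g, hu⟩
  have hφw : φ g' • e ⟨w, hw⟩ = e ⟨w, hw⟩ := by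
    rw [← e.symm_apply_eq]
    exact Subtype.ext ((hcompat g' ⟨w, hw⟩).trans hgw)
  have hz' := hcompat g' ⟨z, hz⟩
  rw [hfree _ _ hφw, one_smul, Equiv.symm_apply_apply] at hz'
  exact hz'.symm

theorem stmt_0_general {V : Type*} (Γ : SimpleGraph V) (hconn : Γ.Connected)
    (G : Subgroup (Equiv.Perm V)) (hloc : IsLocallyOPairs 3 Γ G) (x : V) :
    ballStab Γ G x 1 = ⊥ := by
  refine (Subgroup.eq_bot_iff_forall _).2 fun g hg => ?_
  rw [mem_ballStab_iff] at hg
  refine Subtype.ext (eq_one_of_fix_neighborSet hconn (g : Equiv.Perm V)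
    (fun u w hw hu hgw z hz =>
      hloc.apply_eq_of_fix_adj OPairs.eq_one_of_smul_eq g hw hu hgw hz)
    (hg x (by simp)) fun z hz => hg z (SimpleGraph.dist_eq_one_iff_adj.2 hz).le)

/-- For the permutation group `L ≅ Sym(3)` acting on ordered pairs of distinct
elements of `{1,2,3}` and any locally `L` pair `(Γ,G)`, the pointwise stabiliser of the
ball of radius one around any vertex is trivial. -/
theorem stmt_0 {V : Type*} [Fintype V] (Γ : SimpleGraph V) (hconn : Γ.Connected)
    (G : Subgroup (Equiv.Perm V)) (hloc : IsLocallyOPairs 3 Γ G) (x : V) :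
    ballStab Γ G x 1 = ⊥ :=
  stmt_0_general Γ hconn G hloc x
end

section
/- (Hauptlemma) Let Γ be a finite connected simple graph and G ≤ Aut(Γ) a vertex-transitive group such that for every vertex v the stabiliser G_v is transitive on Γ(v). Let {x,y} be an edge of Γ, let G_e denote its setwise stabiliser, and let G_{xy} = G_x ∩ G_y. If K is a subgroup of G_{xy} that is normal in G_e and such that the normaliser N_{G_x}(K) is transitive on Γ(x), then K = 1. -/
/-! Let `N` be the normaliser of `K` in `G`. Since `G_e` normalises `K`, an element of `G`
reversing the edge `{x, y}` lies in `N`; together with the transitivity of `N_x` on `Γ(x)` this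
makes the `N`-orbit of `x` closed under adjacency, so by connectedness `N` is transitive on
vertices. As `K ≤ G_x` is normal in `N`, it fixes every `n • x`, i.e. every vertex. -/

open MulAction Pointwise

lemma SimpleGraph.Preconnected.mem_of_adj_closed {V : Type*} {Γ : SimpleGraph V}
    (hΓ : Γ.Preconnected) {S : Set V} {x : V} (hx : x ∈ S)
    (hS : ∀ u v, Γ.Adj u v → u ∈ S → v ∈ S) (v : V) : v ∈ S := by
  obtain ⟨p⟩ := hΓ x v
  induction p with
  | nil => exact hx
  | cons h _ ih => exact ih (hS _ _ h hx)

lemma PreservesAdj.adj_smul {V : Type*} {Γ : SimpleGraph V} {G : Subgroup (Equiv.Perm V)}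
    (hG : PreservesAdj Γ G) (g : G) {u v : V} (h : Γ.Adj u v) : Γ.Adj (g • u) (g • v) :=
  (hG g g.2 u v).mp h

section GraphAction

variable {M V : Type*} [Group M] [MulAction M V] {Γ : SimpleGraph V}

lemma exists_smul_swap_of_adj [IsPretransitive M V]
    (hadj : ∀ (g : M) {u v : V}, Γ.Adj u v → Γ.Adj (g • u) (g • v))
    (hloc : ∀ v : V, ∀ u ∈ Γ.neighborSet v, ∀ w ∈ Γ.neighborSet v,
      ∃ g ∈ stabilizer M v, g • u = w)
    {x y : V} (hxy : Γ.Adj x y) : ∃ s : M, s • x = y ∧ s • y = x := by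
  obtain ⟨t, htx⟩ := exists_smul_eq M x y
  have hty : Γ.Adj y (t • y) := by simpa only [htx] using hadj t hxy
  obtain ⟨h, hh, hhy⟩ := hloc y _ hty x hxy.symm
  refine ⟨h * t, ?_, ?_⟩
  · rw [mul_smul, htx, mem_stabilizer_iff.mp hh]
  · rw [mul_smul, hhy]

lemma mem_stabilizer_pair_of_swap {s : M} {x y : V} (hsx : s • x = y) (hsy : s • y = x) :
    s ∈ stabilizer M ({x, y} : Set V) := by
  rw [mem_stabilizer_iff, Set.smul_set_insert, Set.smul_set_singleton, hsx, hsy,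
    Set.pair_comm]

lemma exists_smul_eq_of_preconnected (hΓ : Γ.Preconnected)
    (hadj : ∀ (g : M) {u v : V}, Γ.Adj u v → Γ.Adj (g • u) (g • v))
    {H : Subgroup M} {x y : V} {s : M} (hs : s ∈ H) (hsx : s • x = y)
    (hloc : ∀ w ∈ Γ.neighborSet x, ∃ h ∈ H ⊓ stabilizer M x, h • y = w) (v : V) :
    ∃ h ∈ H, h • x = v := by
  refine hΓ.mem_of_adj_closed (S := {v | ∃ h ∈ H, h • x = v}) ⟨1, H.one_mem, one_smul M x⟩
    ?_ v
  rintro u w huw ⟨n, hn, rfl⟩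
  have hx : Γ.Adj x (n⁻¹ • w) := by simpa using hadj n⁻¹ huw
  obtain ⟨m, hm, hmy⟩ := hloc _ hx
  refine ⟨n * m * s, H.mul_mem (H.mul_mem hn hm.1) hs, ?_⟩
  rw [mul_smul, mul_smul, hsx, hmy, smul_inv_smul]

lemma le_stabilizer_smul_of_mem_normalizer {K : Subgroup M} {a : V}
    (hK : K ≤ stabilizer M a) {n : M} (hn : n ∈ Subgroup.normalizer (K : Set M)) :
    K ≤ stabilizer M (n • a) := by
  intro k hk
  have hconj : n⁻¹ * k * n ∈ K := (Subgroup.mem_normalizer_iff''.mp hn k).mp hk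
  rw [mem_stabilizer_iff, ← inv_smul_eq_iff, smul_smul, smul_smul]
  exact hK hconj

end GraphAction

theorem stmt_3_general {V : Type*} (Γ : SimpleGraph V) (hconn : Γ.Connected)
    (G : Subgroup (Equiv.Perm V)) (hadj : PreservesAdj Γ G)
    (htrans : MulAction.IsPretransitive G V)
    (hloctrans : ∀ v : V, ∀ u ∈ Γ.neighborSet v, ∀ w ∈ Γ.neighborSet v,
      ∃ g ∈ MulAction.stabilizer G v, g • u = w)
    (x y : V) (hxy : Γ.Adj x y)
    (K : Subgroup G)
    (hK : K ≤ MulAction.stabilizer G x ⊓ MulAction.stabilizer G y)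
    (hKnorm : ∀ g ∈ MulAction.stabilizer G ({x, y} : Set V), ∀ k ∈ K, g * k * g⁻¹ ∈ K)
    (hNtrans : ∀ u ∈ Γ.neighborSet x, ∀ w ∈ Γ.neighborSet x,
      ∃ g ∈ Subgroup.normalizer (K : Set G) ⊓ MulAction.stabilizer G x, g • u = w) :
    K = ⊥ := by
  obtain ⟨s, hsx, hsy⟩ := exists_smul_swap_of_adj hadj.adj_smul hloctrans hxy
  have hsN : s ∈ Subgroup.normalizer (K : Set G) :=
    Subgroup.le_normalizer_iff.mpr hKnorm (mem_stabilizer_pair_of_swap hsx hsy)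
  have horbit := exists_smul_eq_of_preconnected hconn.preconnected hadj.adj_smul hsN hsx
    (hNtrans y hxy)
  rw [Subgroup.eq_bot_iff_forall]
  intro k hk
  refine FaithfulSMul.eq_of_smul_eq_smul (α := V) fun v => ?_
  obtain ⟨n, hn, rfl⟩ := horbit v
  rw [one_smul]
  exact le_stabilizer_smul_of_mem_normalizer (fun k hk => (hK hk).1) hn hk

/-- Hauptlemma: if `Γ` is a finite connected graph, `G ≤ Aut(Γ)` is
vertex-transitive with every vertex-stabiliser transitive on the corresponding
neighbourhood, `{x,y}` is an edge, and `K ≤ G_{xy}` is normal in the edge-stabiliser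
`G_e` with `N_{G_x}(K)` transitive on `Γ(x)`, then `K = 1`. -/
theorem stmt_3 {V : Type*} [Fintype V] (Γ : SimpleGraph V) (hconn : Γ.Connected)
    (G : Subgroup (Equiv.Perm V)) (hadj : PreservesAdj Γ G)
    (htrans : MulAction.IsPretransitive G V)
    (hloctrans : ∀ v : V, ∀ u ∈ Γ.neighborSet v, ∀ w ∈ Γ.neighborSet v,
      ∃ g ∈ MulAction.stabilizer G v, g • u = w)
    (x y : V) (hxy : Γ.Adj x y)
    (K : Subgroup G)
    (hK : K ≤ MulAction.stabilizer G x ⊓ MulAction.stabilizer G y)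
    (hKnorm : ∀ g ∈ MulAction.stabilizer G ({x, y} : Set V), ∀ k ∈ K, g * k * g⁻¹ ∈ K)
    (hNtrans : ∀ u ∈ Γ.neighborSet x, ∀ w ∈ Γ.neighborSet x,
      ∃ g ∈ Subgroup.normalizer (K : Set G) ⊓ MulAction.stabilizer G x, g • u = w) :
    K = ⊥ :=
  stmt_3_general Γ hconn G hadj htrans hloctrans x y hxy K hK hKnorm hNtrans
end

section
/- Let p be a prime, let P be a finite p-group, let A ≤ P be an elementary abelian subgroup of maximal order among all elementary abelian subgroups of P, and let Z ≤ P be any elementary abelian subgroup. Then C_Z(A) = Z ∩ A and |Z : C_Z(A)| ≤ |A : C_A(Z)|. -/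
/-- A subgroup is elementary abelian for the prime `p` if it is commutative and every
element has order dividing `p`. -/
def IsElemAbelian (p : ℕ) {P : Type*} [Group P] (A : Subgroup P) : Prop :=
  (∀ x ∈ A, ∀ y ∈ A, x * y = y * x) ∧ ∀ x ∈ A, x ^ p = 1

/-!
If an elementary abelian subgroup `H` centralises `A`, then `H ⊔ A` is elementary abelian, so
maximality of `|A|` forces `H ≤ A`; applied to `H = C_Z(A)` this gives `C_Z(A) = Z ∩ A`.
For the index bound put `C = C_A(Z)`: `Z` and `C` commute, so `Z ⊔ C` is elementary abelian and
`|Z : Z ∩ A| = |Z : Z ∩ C| = |Z ⊔ C : C| ≤ |A : C|` by the second isomorphism theorem and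
`|Z ⊔ C| ≤ |A|`.
-/

namespace Subgroup

variable {G : Type*} [Group G]

theorem relIndex_sup_right_of_le_normalizer {H N : Subgroup G} (hLE : H ≤ normalizer N) :
    N.relIndex (H ⊔ N) = N.relIndex H :=
  letI := normal_subgroupOf_of_le_normalizer hLE
  letI := normal_subgroupOf_sup_of_le_normalizer hLE
  Nat.card_congr (QuotientGroup.quotientInfEquivProdNormalizerQuotient H N hLE).toEquiv.symm

theorem card_mul_relIndex {H K : Subgroup G} (hHK : H ≤ K) :
    Nat.card H * H.relIndex K = Nat.card K := by
  simpa only [relIndex_bot_left] using relIndex_mul_relIndex ⊥ H K bot_le hHK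

theorem relIndex_le_relIndex_of_card_le {H K L : Subgroup G} [Finite H] (hHK : H ≤ K)
    (hHL : H ≤ L) (hcard : Nat.card K ≤ Nat.card L) : H.relIndex K ≤ H.relIndex L := by
  refine Nat.le_of_mul_le_mul_left ?_ (Nat.card_pos (α := H))
  rwa [card_mul_relIndex hHK, card_mul_relIndex hHL]

end Subgroup

namespace IsElemAbelian

open Subgroup

variable {p : ℕ} {G : Type*} [Group G] {H K : Subgroup G}

theorem mono (hHK : H ≤ K) (hK : IsElemAbelian p K) : IsElemAbelian p H :=
  ⟨fun x hx y hy => hK.1 x (hHK hx) y (hHK hy), fun x hx => hK.2 x (hHK hx)⟩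

theorem le_centralizer (hH : IsElemAbelian p H) : H ≤ centralizer (H : Set G) :=
  fun x hx => mem_centralizer_iff.2 fun y hy => hH.1 y hy x hx

theorem sup (hH : IsElemAbelian p H) (hK : IsElemAbelian p K)
    (hHK : H ≤ centralizer (K : Set G)) : IsElemAbelian p (H ⊔ K) := by
  have hcomm : ∀ h ∈ H, ∀ k ∈ K, Commute h k := fun h hh k hk =>
    (mem_centralizer_iff.1 (hHK hh) k hk).symm
  have hmem : ∀ x ∈ H ⊔ K, ∃ h ∈ H, ∃ k ∈ K, h * k = x := fun x hx => by
    rwa [← SetLike.mem_coe,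
      coe_mul_of_left_le_normalizer_right H K (hHK.trans (centralizer_le_normalizer _))] at hx
  constructor
  · intro x hx y hy
    obtain ⟨h₁, hh₁, k₁, hk₁, rfl⟩ := hmem x hx
    obtain ⟨h₂, hh₂, k₂, hk₂, rfl⟩ := hmem y hy
    refine Commute.eq (Commute.mul_left ?_ ?_) <;> refine Commute.mul_right ?_ ?_
    exacts [hH.1 h₁ hh₁ h₂ hh₂, hcomm h₁ hh₁ k₂ hk₂, (hcomm h₂ hh₂ k₁ hk₁).symm,
      hK.1 k₁ hk₁ k₂ hk₂]
  · intro x hx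
    obtain ⟨h, hh, k, hk, rfl⟩ := hmem x hx
    rw [(hcomm h hh k hk).mul_pow, hH.2 h hh, hK.2 k hk, one_mul]

theorem le_of_le_centralizer_of_maximal [Finite G] {A : Subgroup G} (hH : IsElemAbelian p H)
    (hHA : H ≤ centralizer (A : Set G)) (hA : IsElemAbelian p A)
    (hAmax : ∀ B : Subgroup G, IsElemAbelian p B → Nat.card B ≤ Nat.card A) : H ≤ A := by
  have hsup : A = H ⊔ A := eq_of_le_of_card_ge le_sup_right (hAmax _ (hH.sup hA hHA))
  exact hsup ▸ le_sup_left

end IsElemAbelian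

open Subgroup in
theorem stmt_6_general (p : ℕ) {P : Type*} [Group P] [Fintype P]
    (A Z : Subgroup P)
    (hA : IsElemAbelian p A) (hZ : IsElemAbelian p Z)
    (hAmax : ∀ B : Subgroup P, IsElemAbelian p B → Nat.card B ≤ Nat.card A) :
    Z ⊓ Subgroup.centralizer (A : Set P) = Z ⊓ A ∧
    (Subgroup.centralizer (A : Set P)).relIndex Z ≤
      (Subgroup.centralizer (Z : Set P)).relIndex A := by
  have hCZA : Z ⊓ centralizer (A : Set P) = Z ⊓ A :=
    le_antisymm
      (le_inf inf_le_left <| (hZ.mono inf_le_left).le_of_le_centralizer_of_maximal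
        inf_le_right hA hAmax)
      (inf_le_inf_left Z hA.le_centralizer)
  refine ⟨hCZA, ?_⟩
  set C := centralizer (Z : Set P) ⊓ A
  have hC : IsElemAbelian p C := hA.mono inf_le_right
  have hZC : Z ≤ centralizer (C : Set P) := le_centralizer_iff.1 inf_le_left
  have hinf : Z ⊓ C = Z ⊓ A := by rw [← inf_assoc, inf_eq_left.2 hZ.le_centralizer]
  calc (centralizer (A : Set P)).relIndex Z
      = C.relIndex (Z ⊔ C) := by
        rw [← inf_relIndex_left, hCZA, ← hinf, inf_relIndex_left,
          relIndex_sup_right_of_le_normalizer (hZC.trans (centralizer_le_normalizer _))]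
    _ ≤ C.relIndex A :=
        relIndex_le_relIndex_of_card_le le_sup_right inf_le_right (hAmax _ (hZ.sup hC hZC))
    _ = (centralizer (Z : Set P)).relIndex A := inf_relIndex_right _ _

/-- in a finite `p`-group `P`, if `A` is an elementary abelian subgroup of
maximal order and `Z` is any elementary abelian subgroup, then `C_Z(A) = Z ∩ A` and
`|Z : C_Z(A)| ≤ |A : C_A(Z)|`. -/
theorem stmt_6 (p : ℕ) (hp : p.Prime) {P : Type*} [Group P] [Fintype P]
    (hP : IsPGroup p P) (A Z : Subgroup P)
    (hA : IsElemAbelian p A) (hZ : IsElemAbelian p Z)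
    (hAmax : ∀ B : Subgroup P, IsElemAbelian p B → Nat.card B ≤ Nat.card A) :
    Z ⊓ Subgroup.centralizer (A : Set P) = Z ⊓ A ∧
    (Subgroup.centralizer (A : Set P)).relIndex Z ≤
      (Subgroup.centralizer (Z : Set P)).relIndex A :=
  stmt_6_general p A Z hA hZ hAmax
end

section
/- Let n ≥ 4, let L be the permutation group induced by Sym(n) on ordered pairs of distinct elements of {1,…,n}, let (Γ,G) be a locally L pair, let {x,y} be an edge of Γ, and let p be a prime such that G_{xy}^{[1]} is a nontrivial p-group. For each vertex v let Q_v denote the largest normal p-subgroup of G_v^{[1]}, and assume that C_{G_v^{[1]}}(Q_v) ≤ Q_v for every vertex v, and that the largest normal p-subgroup S_{xy} of G_{xy} satisfies C_{G_{xy}}(S_{xy}) ≤ S_{xy}. Let Z_x = Ω_1(Z(Q_x)). Then the permutation groups induced on Γ(x) by C_{G_x}(Q_x) and by C_{G_x}(Z_x) are both intransitive and semiregular (no nontrivial element of the induced group fixes a point of Γ(x)). -/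
open MulAction Pointwise

/-- The subgroup `C ≤ G` induces a transitive permutation group on `Γ(x)`. -/
def TransOnNbrs {V : Type*} (Γ : SimpleGraph V) (G : Subgroup (Equiv.Perm V))
    (C : Subgroup G) (x : V) : Prop :=
  ∀ u ∈ Γ.neighborSet x, ∀ w ∈ Γ.neighborSet x, ∃ g ∈ C, g • u = w

/-- The subgroup `C ≤ G` induces a semiregular permutation group on `Γ(x)`: any element
of `C` fixing some neighbour of `x` induces the identity on `Γ(x)`. -/
def SemiregOnNbrs {V : Type*} (Γ : SimpleGraph V) (G : Subgroup (Equiv.Perm V))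
    (C : Subgroup G) (x : V) : Prop :=
  ∀ g ∈ C, ∀ u ∈ Γ.neighborSet x, g • u = u → ∀ w ∈ Γ.neighborSet x, g • w = w

/-!
Write `C_x` for `C_{G_x}(Q_x)` or `C_{G_x}(Z_x)`; both are normal in `G_x` and depend
equivariantly on `x`. If `C_x` were transitive on `Γ(x)`, then `G_x = C_x G_{xy}`, so a nontrivial
subgroup `A ≤ G_{xy}` normalised by `G_{xy}` and centralised by `C_x` and `C_y` would be normal in
`G_x` and in `G_y`; by connectedness and local transitivity it would then be normal in every
vertex stabiliser and so fix every vertex. For `C_{G_x}(Q_x)` take `A = G_{xy}^{[1]}`, for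
`C_{G_x}(Z_x)` take `A = Z_x ∩ C(S_{xy})`. Semiregularity follows from intransitivity: the group
induced by `C_x` on `Γ(x)` is normal in `Sym(n)`, a normal subgroup of `Sym(n)` with a nontrivial
element fixing a point contains `Alt(n)`, and `Alt(n)` is transitive on ordered pairs for `n ≥ 4`.
-/

open Equiv Subgroup

namespace Equiv.Perm

variable {α : Type*} [Fintype α] [DecidableEq α]

theorem alternatingGroup_le_of_normal_of_apply_eq {N : Subgroup (Perm α)} (hN : N.Normal)
    {σ : Perm α} (hσN : σ ∈ N) (hσ : σ ≠ 1) {a : α} (ha : σ a = a) :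
    alternatingGroup α ≤ N := by
  obtain ⟨c, hc⟩ : ∃ c, σ c ≠ c := by
    by_contra! h
    exact hσ (Equiv.ext h)
  have hca : c ≠ a := by rintro rfl; exact hc ha
  have hσca : σ c ≠ a := fun h => hca (σ.injective (h.trans ha.symm))
  -- the commutator `[σ, (a c)] = (a σc)(a c)` is a 3-cycle in `N`
  have hmem : swap a (σ c) * swap a c ∈ N := by
    have := N.mul_mem hσN (hN.conj_mem _ (N.inv_mem hσN) (swap a c))
    rwa [swap_inv, ← mul_assoc, ← mul_assoc, ← swap_apply_apply, ha] at this
  have h3 : (swap a (σ c) * swap a c).IsThreeCycle :=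
    isThreeCycle_swap_mul_swap_same hσca.symm hca.symm hc
  rw [← closure_three_cycles_eq_alternating, closure_le]
  intro τ hτ
  obtain ⟨π, rfl⟩ :=
    isConj_iff.mp (isConj_iff_cycleType_eq.mpr (h3.cycleType.trans hτ.cycleType.symm))
  exact hN.conj_mem _ hmem π

end Equiv.Perm

namespace OPairs

variable {n : ℕ}

theorem smul_eq_iff {σ : Perm (Fin n)} {P R : OPairs n} :
    σ • P = R ↔ σ P.1.1 = R.1.1 ∧ σ P.1.2 = R.1.2 := by
  rw [Subtype.ext_iff, Prod.ext_iff]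
  rfl

theorem exists_smul_eq (P R : OPairs n) : ∃ σ : Perm (Fin n), σ • P = R := by
  obtain ⟨σ, h1, h2⟩ :=
    MulAction.is_two_pretransitive_iff.mp (Perm.isMultiplyPretransitive (Fin n) 2) P.2 R.2
  exact ⟨σ, smul_eq_iff.mpr ⟨h1, h2⟩⟩

theorem exists_mem_alternatingGroup_smul_eq (hn : 4 ≤ n) (P R : OPairs n) :
    ∃ σ ∈ alternatingGroup (Fin n), σ • P = R := by
  have := alternatingGroup.isMultiplyPretransitive (Fin n)
  have : IsMultiplyPretransitive (alternatingGroup (Fin n)) (Fin n) 2 :=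
    isMultiplyPretransitive_of_le (n := Nat.card (Fin n) - 2) (by simp; omega) (by simp)
  obtain ⟨σ, h1, h2⟩ := MulAction.is_two_pretransitive_iff.mp this P.2 R.2
  exact ⟨σ, σ.2, smul_eq_iff.mpr ⟨h1, h2⟩⟩

end OPairs

section GroupTheory

variable {G : Type*} [Group G] {p : ℕ}

theorem Subgroup.conj_mem_centralizer_of_inv_conj_mem {H K : Subgroup G}
    {g c : G} (hc : c ∈ centralizer (H : Set G)) (hKH : ∀ h ∈ K, g⁻¹ * h * g ∈ H) :
    g * c * g⁻¹ ∈ centralizer (K : Set G) := by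
  refine mem_centralizer_iff.mpr fun h hh => ?_
  have hcomm := mem_centralizer_iff.mp hc _ (hKH h hh)
  calc h * (g * c * g⁻¹) = g * ((g⁻¹ * h * g) * c) * g⁻¹ := by group
    _ = g * (c * (g⁻¹ * h * g)) * g⁻¹ := by rw [hcomm]
    _ = g * c * g⁻¹ * h := by group

theorem Subgroup.normalizer_le_normalizer_centralizer (H : Subgroup G) :
    normalizer (H : Set G) ≤ normalizer (centralizer (H : Set G) : Set G) :=
  le_normalizer_iff.mpr fun _ hg _ hc => conj_mem_centralizer_of_inv_conj_mem hc fun h hh => by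
    simpa using (mem_normalizer_iff.mp (inv_mem hg) h).mp hh

variable (p) in
/-- `Ω₁(Z(H))` -/
def omegaOneCenter (H : Subgroup G) : Subgroup G where
  carrier := {g | g ∈ H ⊓ centralizer (H : Set G) ∧ g ^ p = 1}
  one_mem' := ⟨one_mem _, one_pow p⟩
  mul_mem' := by
    rintro a b ⟨ha, hap⟩ ⟨hb, hbp⟩
    refine ⟨mul_mem ha hb, ?_⟩
    rw [Commute.mul_pow (mem_centralizer_iff.mp hb.2 a ha.1), hap, hbp, one_mul]
  inv_mem' := by
    rintro a ⟨ha, hap⟩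
    exact ⟨inv_mem ha, by rw [inv_pow, hap, inv_one]⟩

theorem omegaOneCenter_le (H : Subgroup G) : omegaOneCenter p H ≤ H :=
  fun _ hg => hg.1.1

theorem IsPGroup.omegaOneCenter_ne_bot [Finite G] [Fact p.Prime] {H : Subgroup G}
    (hH : IsPGroup p H) (hne : H ≠ ⊥) : omegaOneCenter p H ≠ ⊥ := by
  have : Nontrivial H := (nontrivial_iff_ne_bot H).mpr hne
  have := hH.center_nontrivial
  have hdvd : p ∣ Nat.card (center H) :=
    ((hH.to_subgroup _).card_eq_or_dvd).resolve_left Finite.one_lt_card.ne'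
  obtain ⟨z, hz⟩ := exists_prime_orderOf_dvd_card' p hdvd
  have hzG : orderOf ((z : H) : G) = p := by rw [orderOf_coe, orderOf_coe, hz]
  refine ne_bot_iff_exists_ne_one.mpr ⟨⟨(z : H), ⟨(z : H).2, ?_⟩, ?_⟩, ?_⟩
  · exact mem_centralizer_iff.mpr fun h hh =>
      congrArg Subtype.val (mem_center_iff.mp z.2 ⟨h, hh⟩)
  · rw [← hzG, pow_orderOf_eq_one]
  · intro h1
    rw [show ((z : H) : G) = 1 from congrArg Subtype.val h1, orderOf_one] at hzG
    exact (Fact.out : p.Prime).one_lt.ne hzG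

/-- Count the fixed points of the conjugation action of `S` on `N` modulo `p`. -/
theorem IsPGroup.inf_centralizer_ne_bot [Finite G] [Fact p.Prime] {S N : Subgroup G}
    (hS : IsPGroup p S) (hNS : N ≤ S) (hSN : S ≤ normalizer (N : Set G)) (hN : N ≠ ⊥) :
    N ⊓ centralizer (S : Set G) ≠ ⊥ := by
  have : (N.subgroupOf S).Normal := (normal_subgroupOf_iff_le_normalizer hNS).mpr hSN
  have : Nontrivial (N.subgroupOf S) :=
    (subgroupOfEquivOfLe hNS).nontrivial_congr.mpr ((nontrivial_iff_ne_bot N).mpr hN)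
  have hdvd : p ∣ Nat.card (N.subgroupOf S) :=
    ((hS.to_subgroup _).card_eq_or_dvd).resolve_left Finite.one_lt_card.ne'
  obtain ⟨b, hb, hb1⟩ :=
    (hS.of_equiv ConjAct.toConjAct).exists_fixed_point_of_prime_dvd_card_of_fixed_point
      (N.subgroupOf S) hdvd (a := 1) (fun g => smul_one g)
  refine ne_bot_iff_exists_ne_one.mpr ⟨⟨(b : S), mem_subgroupOf.mp b.2, ?_⟩, ?_⟩
  · refine mem_centralizer_iff.mpr fun s hs => ?_
    have := congrArg (fun k : N.subgroupOf S => ((k : S) : G)) (hb (ConjAct.toConjAct ⟨s, hs⟩))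
    simp only [ConjAct.Subgroup.val_conj_smul, ConjAct.toConjAct_smul, coe_mul, coe_inv] at this
    exact mul_inv_eq_iff_eq_mul.mp this
  · exact fun h => hb1 (Subtype.ext (Subtype.ext (congrArg Subtype.val h).symm))

end GroupTheory

section Equivariance

variable {G V : Type*} [Group G] [MulAction G V]

/-- One inclusion suffices: applied to `g⁻¹` it gives `g F_v g⁻¹ = F_{g • v}`. -/
def IsConjEquivariant (F : V → Subgroup G) : Prop :=
  ∀ (g : G) (v : V), ∀ k ∈ F v, g * k * g⁻¹ ∈ F (g • v)

theorem isConjEquivariant_stabilizer : IsConjEquivariant (stabilizer G : V → Subgroup G) := by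
  intro g v k hk
  rw [mem_stabilizer_iff] at hk ⊢
  rw [mul_smul, mul_smul, inv_smul_smul, hk]

namespace IsConjEquivariant

variable {F F' : V → Subgroup G}

theorem inv_conj_mem (hF : IsConjEquivariant F) {g k : G} {v : V} (hk : k ∈ F (g • v)) :
    g⁻¹ * k * g ∈ F v := by
  simpa using hF g⁻¹ (g • v) k hk

theorem stabilizer_le_normalizer (hF : IsConjEquivariant F) (v : V) :
    stabilizer G v ≤ normalizer (F v : Set G) :=
  le_normalizer_iff.mpr fun g hg k hk => mem_stabilizer_iff.mp hg ▸ hF g v k hk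

theorem inf (hF : IsConjEquivariant F) (hF' : IsConjEquivariant F') :
    IsConjEquivariant fun v => F v ⊓ F' v :=
  fun g v k hk => ⟨hF g v k hk.1, hF' g v k hk.2⟩

theorem centralizer (hF : IsConjEquivariant F) :
    IsConjEquivariant fun v => centralizer (F v : Set G) :=
  fun _ _ _ hk => conj_mem_centralizer_of_inv_conj_mem hk fun _ hh => hF.inv_conj_mem hh

theorem omegaOneCenter (hF : IsConjEquivariant F) (p : ℕ) :
    IsConjEquivariant fun v => omegaOneCenter p (F v) :=
  fun g v k hk =>
    ⟨(hF.inf hF.centralizer) g v k hk.1, by rw [conj_pow, hk.2, mul_one, mul_inv_cancel]⟩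

end IsConjEquivariant

/-- `S = O_p(B)`. -/
structure IsLargestNormalPSubgroup (p : ℕ) (B S : Subgroup G) : Prop where
  le : S ≤ B
  isPGroup : IsPGroup p S
  le_normalizer : B ≤ normalizer (S : Set G)
  le_of_le_normalizer :
    ∀ R : Subgroup G, R ≤ B → IsPGroup p R → B ≤ normalizer (R : Set G) → R ≤ S

theorem IsConjEquivariant.of_isLargestNormalPSubgroup {p : ℕ} {B F : V → Subgroup G}
    (hB : IsConjEquivariant B) (hF : ∀ v, IsLargestNormalPSubgroup p (B v) (F v)) :
    IsConjEquivariant F := by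
  intro g v k hk
  refine (hF (g • v)).le_of_le_normalizer ((F v).map (MulAut.conj g).toMonoidHom) ?_
    ((hF v).isPGroup.map _) ?_ ⟨k, hk, rfl⟩
  · rintro _ ⟨k, hk, rfl⟩
    exact hB g v k ((hF v).le hk)
  · refine le_normalizer_iff.mpr ?_
    rintro b hb _ ⟨k, hk, rfl⟩
    refine ⟨(g⁻¹ * b * g) * k * (g⁻¹ * b * g)⁻¹,
      le_normalizer_iff.mp (hF v).le_normalizer _ (hB.inv_conj_mem hb) k hk, ?_⟩
    simp only [MulEquiv.coe_toMonoidHom, MulAut.conj_apply]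
    group

end Equivariance

section Graph

variable {V : Type*} {Γ : SimpleGraph V} {G : Subgroup (Perm V)}

theorem PreservesAdj.adj_smul_iff (hP : PreservesAdj Γ G) (g : G) {u v : V} :
    Γ.Adj (g • u) (g • v) ↔ Γ.Adj u v :=
  (hP g g.2 u v).symm

theorem ballStab_le_stabilizer (v : V) (i : ℕ) : ballStab Γ G v i ≤ stabilizer G v :=
  iInf₂_le v (by simp)

theorem ballStab_one_le_stabilizer_of_adj {v w : V} (h : Γ.Adj v w) :
    ballStab Γ G v 1 ≤ stabilizer G w :=
  iInf₂_le w (SimpleGraph.dist_eq_one_iff_adj.mpr h).le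

theorem mem_ballStab_one (hconn : Γ.Connected) {g : G} {v : V} :
    g ∈ ballStab Γ G v 1 ↔ g • v = v ∧ ∀ w, Γ.Adj v w → g • w = w := by
  refine ⟨fun hg => ⟨ballStab_le_stabilizer v 1 hg,
    fun w hw => ballStab_one_le_stabilizer_of_adj hw hg⟩, ?_⟩
  rintro ⟨hv, hw⟩
  refine mem_iInf.mpr fun w => mem_iInf.mpr fun hd => ?_
  rcases Nat.le_one_iff_eq_zero_or_eq_one.mp hd with hd | hd
  · rwa [← hconn.dist_eq_zero_iff.mp hd]
  · exact hw w (SimpleGraph.dist_eq_one_iff_adj.mp hd)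

theorem isConjEquivariant_ballStab_one (hconn : Γ.Connected) (hP : PreservesAdj Γ G) :
    IsConjEquivariant fun v => ballStab Γ G v 1 := by
  intro g v k hk
  rw [mem_ballStab_one hconn] at hk ⊢
  refine ⟨by simp [mul_smul, hk.1], fun w hw => ?_⟩
  have hw' : Γ.Adj v (g⁻¹ • w) := (hP.adj_smul_iff g).mp (by rwa [smul_inv_smul])
  simp [mul_smul, hk.2 _ hw']

theorem inf_stabilizer_le_normalizer_ballStab_inf (hconn : Γ.Connected) (hP : PreservesAdj Γ G)
    (x y : V) : stabilizer G x ⊓ stabilizer G y ≤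
      normalizer ((ballStab Γ G x 1 ⊓ ballStab Γ G y 1 : Subgroup G) : Set G) :=
  (inf_le_inf ((isConjEquivariant_ballStab_one hconn hP).stabilizer_le_normalizer x)
    ((isConjEquivariant_ballStab_one hconn hP).stabilizer_le_normalizer y)).trans
    inf_normalizer_le_normalizer_inf

theorem TransOnNbrs.conj (hP : PreservesAdj Γ G) {C C' : Subgroup G} {x : V}
    (hT : TransOnNbrs Γ G C x) (g : G) (hCC' : ∀ c ∈ C, g * c * g⁻¹ ∈ C') :
    TransOnNbrs Γ G C' (g • x) := by
  intro u hu w hw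
  have hadj : ∀ {u}, Γ.Adj (g • x) u → Γ.Adj x (g⁻¹ • u) := fun h =>
    (hP.adj_smul_iff g).mp (by rwa [smul_inv_smul])
  obtain ⟨c, hc, hcuw⟩ := hT _ (hadj hu) _ (hadj hw)
  exact ⟨g * c * g⁻¹, hCC' c hc, by simp [mul_smul, hcuw]⟩

/-- Frattini argument: `G_x = C G_{xy}`. -/
theorem TransOnNbrs.stabilizer_le_normalizer (hP : PreservesAdj Γ G) {C A : Subgroup G}
    {x y : V} (hxy : Γ.Adj x y) (hT : TransOnNbrs Γ G C x) (hCx : C ≤ stabilizer G x)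
    (hCA : C ≤ normalizer (A : Set G))
    (hA : stabilizer G x ⊓ stabilizer G y ≤ normalizer (A : Set G)) :
    stabilizer G x ≤ normalizer (A : Set G) := by
  intro g hg
  rw [mem_stabilizer_iff] at hg
  obtain ⟨c, hc, hcy⟩ := hT y hxy (g • y) (by simpa [hg] using (hP.adj_smul_iff g).mpr hxy)
  have hcx : c • x = x := hCx hc
  have hk : c⁻¹ * g ∈ stabilizer G x ⊓ stabilizer G y :=
    ⟨by simp [mul_smul, hg, inv_smul_eq_iff, hcx], by simp [mul_smul, ← hcy]⟩
  simpa using mul_mem (hCA hc) (hA hk)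

/-- Being normal in `G_v` propagates along edges: if `g ∈ G_u` maps `w₀` to `w`, then
`G_w = g G_{w₀} g⁻¹`. -/
theorem eq_bot_of_stabilizers_le_normalizer (hconn : Γ.Connected)
    (hT : ∀ v, TransOnNbrs Γ G (stabilizer G v) v) {x y : V} (hxy : Γ.Adj x y)
    {A : Subgroup G} (hA : A ≤ stabilizer G x ⊓ stabilizer G y)
    (hAx : stabilizer G x ≤ normalizer (A : Set G))
    (hAy : stabilizer G y ≤ normalizer (A : Set G)) :
    A = ⊥ := by
  let good (v : V) : Prop := A ≤ stabilizer G v ∧ stabilizer G v ≤ normalizer (A : Set G)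
  have step {u w₀ w : V} (hu : good u) (hw₀ : good w₀) (huw₀ : Γ.Adj u w₀)
      (huw : Γ.Adj u w) : good w := by
    obtain ⟨g, hg, rfl⟩ := hT u w₀ huw₀ w huw
    have hgN := hu.2 hg
    refine ⟨fun a ha => ?_, fun h hh => ?_⟩
    · have : g⁻¹ * a * g ∈ A := by simpa using (le_normalizer_iff.mp hu.2) _ (inv_mem hg) a ha
      have h0 : (g⁻¹ * a * g) • w₀ = w₀ := hw₀.1 this
      rw [mem_stabilizer_iff]
      simpa [mul_smul, inv_smul_eq_iff] using h0
    · have : g⁻¹ * h * g ∈ stabilizer G w₀ := by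
        rw [mem_stabilizer_iff] at hh ⊢
        simp [mul_smul, hh]
      simpa [mul_assoc] using mul_mem (mul_mem hgN (hw₀.2 this)) (inv_mem hgN)
  have hwalk : ∀ {u v : V} (_ : Γ.Walk u v),
      (good u ∧ ∃ w₀, Γ.Adj u w₀ ∧ good w₀) → good v := by
    intro u v p
    induction p with
    | nil => exact fun h => h.1
    | cons hadj _ ih =>
      rintro ⟨hu, w₀, huw₀, hw₀⟩
      exact ih ⟨step hu hw₀ huw₀ hadj, _, hadj.symm, hu⟩
  refine eq_bot_iff.mpr fun a ha => Subtype.ext (Equiv.ext fun v => ?_)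
  exact (hwalk (hconn.preconnected x v).some ⟨⟨hA.trans inf_le_left, hAx⟩, y, hxy,
    ⟨hA.trans inf_le_right, hAy⟩⟩).1 ha

end Graph

section LocalAction

variable {V : Type*} {Γ : SimpleGraph V} {G : Subgroup (Perm V)} {n : ℕ} {x : V}
  {e : Γ.neighborSet x ≃ OPairs n} {φ : stabilizer G x →* Perm (Fin n)}

theorem smul_eq_iff_of_compat
    (he : ∀ (g : stabilizer G x) (v : Γ.neighborSet x),
      ((e.symm (φ g • e v) : Γ.neighborSet x) : V) = g • (v : V))
    (g : stabilizer G x) (v w : Γ.neighborSet x) :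
    φ g • e v = e w ↔ g • (v : V) = w := by
  rw [← e.symm_apply_eq, Subtype.ext_iff, he]

theorem transOnNbrs_of_compat
    (he : ∀ (g : stabilizer G x) (v : Γ.neighborSet x),
      ((e.symm (φ g • e v) : Γ.neighborSet x) : V) = g • (v : V))
    {C : Subgroup G}
    (h : ∀ P R : OPairs n, ∃ σ ∈ (C.subgroupOf (stabilizer G x)).map φ, σ • P = R) :
    TransOnNbrs Γ G C x := by
  intro u hu w hw
  obtain ⟨_, ⟨c, hc, rfl⟩, hσ⟩ := h (e ⟨u, hu⟩) (e ⟨w, hw⟩)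
  exact ⟨c, mem_subgroupOf.mp hc, (smul_eq_iff_of_compat he c ⟨u, hu⟩ ⟨w, hw⟩).mp hσ⟩

theorem IsLocallyOPairs.transOnNbrs_stabilizer (hloc : IsLocallyOPairs n Γ G) (x : V) :
    TransOnNbrs Γ G (stabilizer G x) x := by
  obtain ⟨e, φ, hφ, he⟩ := hloc.2.2 x
  refine transOnNbrs_of_compat he fun P R => ?_
  obtain ⟨σ, hσ⟩ := OPairs.exists_smul_eq P R
  obtain ⟨g, rfl⟩ := hφ σ
  exact ⟨φ g, ⟨g, mem_subgroupOf.mpr g.2, rfl⟩, hσ⟩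

theorem IsLocallyOPairs.semiregOnNbrs_of_not_transOnNbrs (hn : 4 ≤ n)
    (hloc : IsLocallyOPairs n Γ G) {C : Subgroup G} (hCx : C ≤ stabilizer G x)
    (hC : stabilizer G x ≤ normalizer (C : Set G)) (hT : ¬ TransOnNbrs Γ G C x) :
    SemiregOnNbrs Γ G C x := by
  intro g hg u hu hgu w hw
  by_contra hgw
  obtain ⟨e, φ, hφ, he⟩ := hloc.2.2 x
  refine hT (transOnNbrs_of_compat he fun P R => ?_)
  let g' : stabilizer G x := ⟨g, hCx hg⟩
  have : (C.subgroupOf (stabilizer G x)).Normal :=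
    (normal_subgroupOf_iff_le_normalizer hCx).mpr hC
  have hN : ((C.subgroupOf (stabilizer G x)).map φ).Normal := Normal.map this φ hφ
  have hfix : φ g' (e ⟨u, hu⟩).1.1 = (e ⟨u, hu⟩).1.1 :=
    (OPairs.smul_eq_iff.mp ((smul_eq_iff_of_compat he g' ⟨u, hu⟩ ⟨u, hu⟩).mpr hgu)).1
  have hne : φ g' ≠ 1 := fun h1 =>
    hgw ((smul_eq_iff_of_compat he g' ⟨w, hw⟩ ⟨w, hw⟩).mp (by rw [h1, one_smul]))
  obtain ⟨σ, hσ, hσPR⟩ := OPairs.exists_mem_alternatingGroup_smul_eq hn P R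
  exact ⟨σ, Perm.alternatingGroup_le_of_normal_of_apply_eq hN
    ⟨g', mem_subgroupOf.mpr hg, rfl⟩ hne hfix hσ, hσPR⟩

end LocalAction

section Main

variable {V : Type*} {Γ : SimpleGraph V} {G : Subgroup (Perm V)} {x y : V}

theorem not_transOnNbrs_stabilizer_inf_centralizer (hconn : Γ.Connected)
    (hP : PreservesAdj Γ G) (hpre : IsPretransitive G V)
    (hT : ∀ v, TransOnNbrs Γ G (stabilizer G v) v) {F : V → Subgroup G}
    (hF : IsConjEquivariant F) (hxy : Γ.Adj x y) {A : Subgroup G} (hA : A ≠ ⊥)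
    (hAx : A ≤ F x) (hAy : A ≤ F y) (hAxy : A ≤ stabilizer G x ⊓ stabilizer G y)
    (hnorm : stabilizer G x ⊓ stabilizer G y ≤ normalizer (A : Set G)) :
    ¬ TransOnNbrs Γ G (stabilizer G x ⊓ centralizer (F x : Set G)) x := by
  intro hTx
  have normal_of_trans {u v : V} (huv : Γ.Adj u v) (hAu : A ≤ F u)
      (hTu : TransOnNbrs Γ G (stabilizer G u ⊓ centralizer (F u : Set G)) u)
      (huv_norm : stabilizer G u ⊓ stabilizer G v ≤ normalizer (A : Set G)) :
      stabilizer G u ≤ normalizer (A : Set G) :=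
    hTu.stabilizer_le_normalizer hP huv inf_le_left
      (inf_le_right.trans ((centralizer_le hAu).trans (centralizer_le_normalizer _))) huv_norm
  obtain ⟨g, rfl⟩ := hpre.exists_smul_eq x y
  have hTy := hTx.conj hP g ((isConjEquivariant_stabilizer.inf hF.centralizer) g x)
  exact hA (eq_bot_of_stabilizers_le_normalizer hconn hT hxy hAxy
    (normal_of_trans hxy hAx hTx hnorm)
    (normal_of_trans hxy.symm hAy hTy ((inf_comm _ _).le.trans hnorm)))

theorem IsLocallyOPairs.semiregOnNbrs_stabilizer_inf_centralizer {n : ℕ} (hn : 4 ≤ n)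
    (hloc : IsLocallyOPairs n Γ G) {F : V → Subgroup G} (hF : IsConjEquivariant F)
    (hT : ¬ TransOnNbrs Γ G (stabilizer G x ⊓ centralizer (F x : Set G)) x) :
    SemiregOnNbrs Γ G (stabilizer G x ⊓ centralizer (F x : Set G)) x :=
  hloc.semiregOnNbrs_of_not_transOnNbrs hn inf_le_left
    ((isConjEquivariant_stabilizer.inf hF.centralizer).stabilizer_le_normalizer x) hT

variable {p : ℕ} {Q : V → Subgroup G}

theorem ballStab_one_inf_le_of_isLargestNormalPSubgroup (hconn : Γ.Connected)
    (hP : PreservesAdj Γ G) (hxy : Γ.Adj x y) {Qx : Subgroup G}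
    (hQx : IsLargestNormalPSubgroup p (ballStab Γ G x 1) Qx)
    (hpgrp : IsPGroup p ↥(ballStab Γ G x 1 ⊓ ballStab Γ G y 1)) :
    ballStab Γ G x 1 ⊓ ballStab Γ G y 1 ≤ Qx :=
  hQx.le_of_le_normalizer _ inf_le_left hpgrp
    ((le_inf (ballStab_le_stabilizer x 1) (ballStab_one_le_stabilizer_of_adj hxy)).trans
      (inf_stabilizer_le_normalizer_ballStab_inf hconn hP x y))

theorem not_transOnNbrs_centralizer_of_isLargestNormalPSubgroup (hconn : Γ.Connected)
    (hP : PreservesAdj Γ G) (hpre : IsPretransitive G V)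
    (hT : ∀ v, TransOnNbrs Γ G (stabilizer G v) v)
    (hQ : ∀ v, IsLargestNormalPSubgroup p (ballStab Γ G v 1) (Q v)) (hxy : Γ.Adj x y)
    (hne : ballStab Γ G x 1 ⊓ ballStab Γ G y 1 ≠ ⊥)
    (hpgrp : IsPGroup p ↥(ballStab Γ G x 1 ⊓ ballStab Γ G y 1)) :
    ¬ TransOnNbrs Γ G (stabilizer G x ⊓ centralizer (Q x : Set G)) x := by
  refine not_transOnNbrs_stabilizer_inf_centralizer hconn hP hpre hT
    ((isConjEquivariant_ballStab_one hconn hP).of_isLargestNormalPSubgroup hQ) hxy hne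
    (ballStab_one_inf_le_of_isLargestNormalPSubgroup hconn hP hxy (hQ x) hpgrp) ?_
    (inf_le_inf (ballStab_le_stabilizer x 1) (ballStab_le_stabilizer y 1))
    (inf_stabilizer_le_normalizer_ballStab_inf hconn hP x y)
  rw [inf_comm] at hpgrp ⊢
  exact ballStab_one_inf_le_of_isLargestNormalPSubgroup hconn hP hxy.symm (hQ y) hpgrp

/-- The witness is `A = Z_x ∩ C(S_{xy})`, nontrivial since the `p`-group `S_{xy}` normalises
`Z_x ≠ 1`. It centralises `Q_y ≤ S_{xy}`, so by semiregularity at `y` it fixes `Γ(y)`, whence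
`A ≤ Q_y` by self-centralisation and so `A ≤ Z_y`. -/
theorem IsLocallyOPairs.not_transOnNbrs_centralizer_omegaOneCenter [Finite V] [Fact p.Prime]
    {n : ℕ} (hn : 4 ≤ n) (hloc : IsLocallyOPairs n Γ G) (hconn : Γ.Connected)
    (hQ : ∀ v, IsLargestNormalPSubgroup p (ballStab Γ G v 1) (Q v))
    (hQcent : ∀ v, ballStab Γ G v 1 ⊓ centralizer (Q v : Set G) ≤ Q v) {S : Subgroup G}
    (hS : IsLargestNormalPSubgroup p (stabilizer G x ⊓ stabilizer G y) S) (hxy : Γ.Adj x y)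
    (hne : ballStab Γ G x 1 ⊓ ballStab Γ G y 1 ≠ ⊥)
    (hpgrp : IsPGroup p ↥(ballStab Γ G x 1 ⊓ ballStab Γ G y 1)) :
    ¬ TransOnNbrs Γ G (stabilizer G x ⊓ centralizer (omegaOneCenter p (Q x) : Set G)) x := by
  have hP := hloc.1
  have hpre := hloc.2.1
  have hT := hloc.transOnNbrs_stabilizer
  have hQeq := (isConjEquivariant_ballStab_one hconn hP).of_isLargestNormalPSubgroup hQ
  have hZeq := hQeq.omegaOneCenter p
  have hQS {u v : V} (huv : stabilizer G u ⊓ stabilizer G v = stabilizer G x ⊓ stabilizer G y)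
      (hu : Q u ≤ stabilizer G v) : Q u ≤ S :=
    hS.le_of_le_normalizer _ (huv ▸ le_inf ((hQ u).le.trans (ballStab_le_stabilizer u 1)) hu)
      (hQ u).isPGroup (huv ▸ inf_le_left.trans (hQeq.stabilizer_le_normalizer u))
  have hQxS : Q x ≤ S := hQS rfl ((hQ x).le.trans (ballStab_one_le_stabilizer_of_adj hxy))
  have hQyS : Q y ≤ S :=
    hQS (inf_comm _ _) ((hQ y).le.trans (ballStab_one_le_stabilizer_of_adj hxy.symm))
  have hZxy : omegaOneCenter p (Q x) ≤ stabilizer G x ⊓ stabilizer G y :=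
    (omegaOneCenter_le _).trans ((hQ x).le.trans
      (le_inf (ballStab_le_stabilizer x 1) (ballStab_one_le_stabilizer_of_adj hxy)))
  have hQx : Q x ≠ ⊥ := ne_bot_of_le_ne_bot hne
    (ballStab_one_inf_le_of_isLargestNormalPSubgroup hconn hP hxy (hQ x) hpgrp)
  have hA : omegaOneCenter p (Q x) ⊓ centralizer (S : Set G) ≠ ⊥ :=
    hS.isPGroup.inf_centralizer_ne_bot ((omegaOneCenter_le _).trans hQxS)
      (hS.le.trans (inf_le_left.trans (hZeq.stabilizer_le_normalizer x)))
      ((hQ x).isPGroup.omegaOneCenter_ne_bot hQx)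
  have hsemi := hloc.semiregOnNbrs_stabilizer_inf_centralizer hn hQeq
    (not_transOnNbrs_centralizer_of_isLargestNormalPSubgroup hconn hP hpre hT hQ hxy.symm
      (by rwa [inf_comm]) (by rwa [inf_comm]))
  have hAZy : omegaOneCenter p (Q x) ⊓ centralizer (S : Set G) ≤ omegaOneCenter p (Q y) := by
    rintro a ⟨haZ, haS⟩
    obtain ⟨hax, hay⟩ := hZxy haZ
    have haC : a ∈ centralizer (Q y : Set G) := centralizer_le hQyS haS
    have hball : a ∈ ballStab Γ G y 1 :=
      (mem_ballStab_one hconn).mpr ⟨hay, fun w hw => hsemi a ⟨hay, haC⟩ x hxy.symm hax w hw⟩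
    exact ⟨⟨hQcent y ⟨hball, haC⟩, haC⟩, haZ.2⟩
  exact not_transOnNbrs_stabilizer_inf_centralizer hconn hP hpre hT hZeq hxy hA inf_le_left hAZy
    (inf_le_left.trans hZxy) ((le_inf (inf_le_left.trans (hZeq.stabilizer_le_normalizer x))
      (hS.le_normalizer.trans S.normalizer_le_normalizer_centralizer)).trans
        inf_normalizer_le_normalizer_inf)

end Main

theorem stmt_7_general {V : Type*} [Fintype V] (n : ℕ) (hn : 4 ≤ n)
    (Γ : SimpleGraph V) (hconn : Γ.Connected)
    (G : Subgroup (Equiv.Perm V)) (hloc : IsLocallyOPairs n Γ G)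
    (x y : V) (hxy : Γ.Adj x y) (p : ℕ) (hp : p.Prime)
    (hne : ballStab Γ G x 1 ⊓ ballStab Γ G y 1 ≠ ⊥)
    (hpgrp : IsPGroup p ↥(ballStab Γ G x 1 ⊓ ballStab Γ G y 1))
    (Q : V → Subgroup G)
    (hQle : ∀ v, Q v ≤ ballStab Γ G v 1)
    (hQp : ∀ v, IsPGroup p (Q v))
    (hQnorm : ∀ v, ∀ g ∈ ballStab Γ G v 1, ∀ k ∈ Q v, g * k * g⁻¹ ∈ Q v)
    (hQmax : ∀ v, ∀ R : Subgroup G, R ≤ ballStab Γ G v 1 → IsPGroup p R →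
      (∀ g ∈ ballStab Γ G v 1, ∀ k ∈ R, g * k * g⁻¹ ∈ R) → R ≤ Q v)
    (hQcent : ∀ v, ballStab Γ G v 1 ⊓ Subgroup.centralizer (Q v : Set G) ≤ Q v)
    (Sxy : Subgroup G)
    (hSle : Sxy ≤ MulAction.stabilizer G x ⊓ MulAction.stabilizer G y)
    (hSp : IsPGroup p Sxy)
    (hSnorm : ∀ g ∈ MulAction.stabilizer G x ⊓ MulAction.stabilizer G y,
      ∀ k ∈ Sxy, g * k * g⁻¹ ∈ Sxy)
    (hSmax : ∀ R : Subgroup G, R ≤ MulAction.stabilizer G x ⊓ MulAction.stabilizer G y →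
      IsPGroup p R →
      (∀ g ∈ MulAction.stabilizer G x ⊓ MulAction.stabilizer G y, ∀ k ∈ R, g * k * g⁻¹ ∈ R) →
      R ≤ Sxy)
    (Zx : Subgroup G)
    (hZx : Zx = Subgroup.closure
      {g : G | g ∈ Q x ⊓ Subgroup.centralizer (Q x : Set G) ∧ g ^ p = 1}) :
    (¬ TransOnNbrs Γ G (MulAction.stabilizer G x ⊓ Subgroup.centralizer (Q x : Set G)) x ∧
      SemiregOnNbrs Γ G (MulAction.stabilizer G x ⊓ Subgroup.centralizer (Q x : Set G)) x) ∧
    (¬ TransOnNbrs Γ G (MulAction.stabilizer G x ⊓ Subgroup.centralizer (Zx : Set G)) x ∧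
      SemiregOnNbrs Γ G (MulAction.stabilizer G x ⊓ Subgroup.centralizer (Zx : Set G)) x) := by
  have := Fact.mk hp
  have hQ (v : V) : IsLargestNormalPSubgroup p (ballStab Γ G v 1) (Q v) :=
    ⟨hQle v, hQp v, le_normalizer_iff.mpr (hQnorm v),
      fun R hR hRp hRn => hQmax v R hR hRp (le_normalizer_iff.mp hRn)⟩
  have hS : IsLargestNormalPSubgroup p (stabilizer G x ⊓ stabilizer G y) Sxy :=
    ⟨hSle, hSp, le_normalizer_iff.mpr hSnorm,
      fun R hR hRp hRn => hSmax R hR hRp (le_normalizer_iff.mp hRn)⟩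
  have hQeq := (isConjEquivariant_ballStab_one hconn hloc.1).of_isLargestNormalPSubgroup hQ
  obtain rfl : Zx = omegaOneCenter p (Q x) := hZx.trans (closure_eq (omegaOneCenter p (Q x)))
  have hTQ := not_transOnNbrs_centralizer_of_isLargestNormalPSubgroup hconn hloc.1 hloc.2.1
    hloc.transOnNbrs_stabilizer hQ hxy hne hpgrp
  have hTZ := hloc.not_transOnNbrs_centralizer_omegaOneCenter hn hconn hQ hQcent hS hxy hne hpgrp
  exact ⟨⟨hTQ, hloc.semiregOnNbrs_stabilizer_inf_centralizer hn hQeq hTQ⟩,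
    ⟨hTZ, hloc.semiregOnNbrs_stabilizer_inf_centralizer hn (hQeq.omegaOneCenter p) hTZ⟩⟩

/-- with `Q_v` the largest normal `p`-subgroup of `G_v^{[1]}` (assumed
self-centralising in `G_v^{[1]}`), `S_{xy}` the largest normal `p`-subgroup of `G_{xy}`
(assumed self-centralising in `G_{xy}`), and `Z_x = Ω₁(Z(Q_x))`, the groups induced on
`Γ(x)` by `C_{G_x}(Q_x)` and by `C_{G_x}(Z_x)` are intransitive and semiregular. -/
theorem stmt_7 {V : Type*} [Fintype V] (n : ℕ) (hn : 4 ≤ n)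
    (Γ : SimpleGraph V) (hconn : Γ.Connected)
    (G : Subgroup (Equiv.Perm V)) (hloc : IsLocallyOPairs n Γ G)
    (x y : V) (hxy : Γ.Adj x y) (p : ℕ) (hp : p.Prime)
    (hne : ballStab Γ G x 1 ⊓ ballStab Γ G y 1 ≠ ⊥)
    (hpgrp : IsPGroup p ↥(ballStab Γ G x 1 ⊓ ballStab Γ G y 1))
    (Q : V → Subgroup G)
    (hQle : ∀ v, Q v ≤ ballStab Γ G v 1)
    (hQp : ∀ v, IsPGroup p (Q v))
    (hQnorm : ∀ v, ∀ g ∈ ballStab Γ G v 1, ∀ k ∈ Q v, g * k * g⁻¹ ∈ Q v)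
    (hQmax : ∀ v, ∀ R : Subgroup G, R ≤ ballStab Γ G v 1 → IsPGroup p R →
      (∀ g ∈ ballStab Γ G v 1, ∀ k ∈ R, g * k * g⁻¹ ∈ R) → R ≤ Q v)
    (hQcent : ∀ v, ballStab Γ G v 1 ⊓ Subgroup.centralizer (Q v : Set G) ≤ Q v)
    (Sxy : Subgroup G)
    (hSle : Sxy ≤ MulAction.stabilizer G x ⊓ MulAction.stabilizer G y)
    (hSp : IsPGroup p Sxy)
    (hSnorm : ∀ g ∈ MulAction.stabilizer G x ⊓ MulAction.stabilizer G y,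
      ∀ k ∈ Sxy, g * k * g⁻¹ ∈ Sxy)
    (hSmax : ∀ R : Subgroup G, R ≤ MulAction.stabilizer G x ⊓ MulAction.stabilizer G y →
      IsPGroup p R →
      (∀ g ∈ MulAction.stabilizer G x ⊓ MulAction.stabilizer G y, ∀ k ∈ R, g * k * g⁻¹ ∈ R) →
      R ≤ Sxy)
    (hScent : (MulAction.stabilizer G x ⊓ MulAction.stabilizer G y) ⊓
      Subgroup.centralizer (Sxy : Set G) ≤ Sxy)
    (Zx : Subgroup G)
    (hZx : Zx = Subgroup.closure
      {g : G | g ∈ Q x ⊓ Subgroup.centralizer (Q x : Set G) ∧ g ^ p = 1}) :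
    (¬ TransOnNbrs Γ G (MulAction.stabilizer G x ⊓ Subgroup.centralizer (Q x : Set G)) x ∧
      SemiregOnNbrs Γ G (MulAction.stabilizer G x ⊓ Subgroup.centralizer (Q x : Set G)) x) ∧
    (¬ TransOnNbrs Γ G (MulAction.stabilizer G x ⊓ Subgroup.centralizer (Zx : Set G)) x ∧
      SemiregOnNbrs Γ G (MulAction.stabilizer G x ⊓ Subgroup.centralizer (Zx : Set G)) x) :=
  stmt_7_general n hn Γ hconn G hloc x y hxy p hp hne hpgrp Q hQle hQp hQnorm hQmax hQcent Sxy hSle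
    hSp hSnorm hSmax Zx hZx
end
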